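/- Write μ ↗↗ λ if μ ⊆ λ, |λ| = |μ| + 2, and the two boxes of λ\μ lie in one column or in two consecutive columns. Then for every partition λ of 2n (resp. 2n+1) there exists a chain μ^{(0)} ↗↗ μ^{(1)} ↗↗ ... ↗↗ μ^{(n)} = λ where μ^{(0)} is the empty partition (resp. the one-box partition). In particular, every partition of size ≥ 2 has a predecessor under ↗↗. -/

import Mathlib

open scoped BigOperators

def IsPartitionFun (f : ℕ → ℕ) : Prop := Antitone f ∧ ∃ N, ∀ n, N ≤ n → f n = 0

def PartitionF : Type := {f : ℕ → ℕ // IsPartitionFun f}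

noncomputable def psize (μ : PartitionF) : ℕ := ∑ᶠ i, μ.val i

noncomputable def conjP (μ : ℕ → ℕ) (k : ℕ) : ℕ := Nat.card {i : ℕ | k ≤ μ i}

/-- `λ` is obtained from `μ` by adding a vertical domino in column `k`. -/
def VDom (μ lam : ℕ → ℕ) (k : ℕ) : Prop :=
  conjP lam k = conjP μ k + 2 ∧ ∀ i, 1 ≤ i → i ≠ k → conjP lam i = conjP μ i

/-- `λ` is obtained from `μ` by adding one box in column `k` and one box in column `k+1`. -/
def TwoCol (μ lam : ℕ → ℕ) (k : ℕ) : Prop :=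
  conjP lam k = conjP μ k + 1 ∧ conjP lam (k + 1) = conjP μ (k + 1) + 1 ∧
    ∀ i, 1 ≤ i → i ≠ k → i ≠ k + 1 → conjP lam i = conjP μ i

/-- The relation `μ ↗↗ λ`: `μ ⊆ λ`, `|λ| = |μ| + 2`, and the two boxes of `λ∖μ` lie in a
single column or in two consecutive columns. -/
def UpUp (μ lam : PartitionF) : Prop :=
  (∀ i, μ.val i ≤ lam.val i) ∧ psize lam = psize μ + 2 ∧
    ∃ k, 1 ≤ k ∧ (VDom μ.val lam.val k ∨ TwoCol μ.val lam.val k)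

/-- The empty partition. -/
def emptyP : PartitionF := ⟨fun _ => 0, fun _ _ _ => le_rfl, 0, fun _ _ => rfl⟩

/-- The one-box partition `(1)`. -/
def oneboxP : PartitionF :=
  ⟨fun i => if i = 0 then 1 else 0, by
    constructor
    · intro a b hab
      dsimp only
      split_ifs <;> omega
    · exact ⟨1, fun n hn => by simp [Nat.one_le_iff_ne_zero.mp hn]⟩⟩

/-!
Removing a corner box from row `j` of `λ` changes only the length of column `λ_j`, so two
successive corner removals in equal or adjacent columns are a `↗↗`-step. Let `r` be the last
nonzero row. If `λ_r ≥ 2`, or `λ_{r-1} ≥ 3 = λ_r + 2`, a horizontal domino can be removed.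
Otherwise `λ_r = 1` and `λ_{r-1} ∈ {1, 2}`: removing the box of row `r` (column `1`) and then
the last box of row `r - 1` (column `λ_{r-1}`) works. Each step lowers `|λ|` by two, so
iterating reaches `∅` or `(1)` according to the parity of `|λ|`.
-/

theorem Relation.ReflTransGen.exists_seq {α : Type*} {r : α → α → Prop} {a b : α}
    (h : Relation.ReflTransGen r a b) :
    ∃ (n : ℕ) (f : ℕ → α), f 0 = a ∧ f n = b ∧ ∀ i, i < n → r (f i) (f (i + 1)) := by
  induction h with
  | refl => exact ⟨0, fun _ => a, rfl, rfl, fun i hi => absurd hi (Nat.not_lt_zero i)⟩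
  | @tail b c _ hbc ih =>
    obtain ⟨n, f, hf0, hfn, hf⟩ := ih
    refine ⟨n + 1, fun i => if i ≤ n then f i else c, by simpa using hf0, by simp, ?_⟩
    intro i hi
    rcases Nat.lt_or_ge i n with hin | hin
    · simpa [hin.le, Nat.succ_le_of_lt hin] using hf i hin
    · obtain rfl : i = n := by omega
      simpa [hfn] using hbc

namespace PartitionF

lemma eventually_zero (lam : PartitionF) : ∃ N, ∀ n, N ≤ n → lam.val n = 0 := lam.2.2

lemma antitone (lam : PartitionF) : Antitone lam.val := lam.2.1

lemma psize_eq_sum_range (lam : PartitionF) {N : ℕ} (hN : ∀ n, N ≤ n → lam.val n = 0) :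
    psize lam = ∑ i ∈ Finset.range N, lam.val i := by
  refine finsum_eq_sum_of_support_subset _ fun i hi => ?_
  by_contra hiN
  exact hi (hN i (by simpa using hiN))

lemma sum_range_le_psize (lam : PartitionF) (n : ℕ) :
    ∑ i ∈ Finset.range n, lam.val i ≤ psize lam := by
  obtain ⟨N, hN⟩ := lam.eventually_zero
  have hN' : ∀ k, max N n ≤ k → lam.val k = 0 := fun k hk => hN k (le_of_max_le_left hk)
  rw [lam.psize_eq_sum_range hN']
  exact Finset.sum_le_sum_of_subset (Finset.range_subset_range.mpr (le_max_right N n))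

lemma le_psize (lam : PartitionF) (i : ℕ) : lam.val i ≤ psize lam :=
  (Finset.single_le_sum (fun _ _ => Nat.zero_le _) (Finset.self_mem_range_succ i)).trans
    (lam.sum_range_le_psize (i + 1))

lemma eq_emptyP_of_psize_eq_zero {lam : PartitionF} (h : psize lam = 0) : lam = emptyP :=
  Subtype.ext <| funext fun i => Nat.eq_zero_of_le_zero (h ▸ lam.le_psize i)

lemma eq_oneboxP_of_psize_eq_one {lam : PartitionF} (h : psize lam = 1) : lam = oneboxP := by
  have h01 : lam.val 0 + lam.val 1 ≤ 1 := by
    simpa [Finset.sum_range_succ, h] using lam.sum_range_le_psize 2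
  have htail : ∀ i, 1 ≤ i → lam.val i = 0 := fun i hi => by
    have := lam.antitone hi
    have := lam.antitone (Nat.zero_le 1)
    omega
  have h0 : lam.val 0 = 1 := by simpa [h] using (lam.psize_eq_sum_range htail).symm
  refine Subtype.ext <| funext fun i => ?_
  rcases Nat.eq_zero_or_pos i with rfl | hi
  · simpa [oneboxP] using h0
  · simpa [oneboxP, hi.ne'] using htail i hi

lemma psize_eq_zero_of_head_eq_zero {lam : PartitionF} (h : lam.val 0 = 0) : psize lam = 0 := by
  rw [lam.psize_eq_sum_range (N := 0) fun n _ =>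
    Nat.eq_zero_of_le_zero (h ▸ lam.antitone n.zero_le), Finset.sum_range_zero]

lemma exists_last_row (lam : PartitionF) (h : lam.val 0 ≠ 0) :
    ∃ r, lam.val r ≠ 0 ∧ lam.val (r + 1) = 0 := by
  by_contra! hall
  obtain ⟨N, hN⟩ := lam.eventually_zero
  have : ∀ n, lam.val n ≠ 0 := fun n => Nat.rec h (fun n hn => hall n hn) n
  exact this N (hN N le_rfl)

lemma finite_setOf_le (lam : PartitionF) {k : ℕ} (hk : k ≠ 0) : {i | k ≤ lam.val i}.Finite := by
  obtain ⟨N, hN⟩ := lam.eventually_zero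
  refine (Set.finite_Iio N).subset fun i hi => ?_
  by_contra hiN
  have hki : k ≤ lam.val i := hi
  have := hN i (not_lt.mp hiN)
  omega

def removeCorner (lam : PartitionF) (j : ℕ) (hj : lam.val (j + 1) < lam.val j) : PartitionF :=
  ⟨Function.update lam.val j (lam.val j - 1), by
    refine ⟨fun a b hab => ?_, ?_⟩
    · have hba := lam.antitone hab
      have hsucc : a < b → lam.val b ≤ lam.val (a + 1) := fun h => lam.antitone h
      simp only [Function.update_apply]
      split_ifs <;> subst_vars <;> omega
    · obtain ⟨N, hN⟩ := lam.eventually_zero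
      refine ⟨max N (j + 1), fun n hn => ?_⟩
      rw [Function.update_of_ne (by omega)]
      exact hN n (le_of_max_le_left hn)⟩

lemma removeCorner_val (lam : PartitionF) (j : ℕ) (hj : lam.val (j + 1) < lam.val j) :
    (lam.removeCorner j hj).val = Function.update lam.val j (lam.val j - 1) := rfl

lemma removeCorner_apply_self (lam : PartitionF) (j : ℕ) (hj : lam.val (j + 1) < lam.val j) :
    (lam.removeCorner j hj).val j = lam.val j - 1 :=
  Function.update_self _ _ _

lemma removeCorner_apply_of_ne (lam : PartitionF) {i j : ℕ} (hj : lam.val (j + 1) < lam.val j)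
    (hi : i ≠ j) : (lam.removeCorner j hj).val i = lam.val i :=
  Function.update_of_ne hi _ _

end PartitionF

open PartitionF

-- `conjP _ 0 = Nat.card ℕ = 0`, so the clause for column `0` is harmless.
def AddsBox (μ lam : PartitionF) (c : ℕ) : Prop :=
  (∀ i, μ.val i ≤ lam.val i) ∧ psize lam = psize μ + 1 ∧ 1 ≤ c ∧
    conjP lam.val c = conjP μ.val c + 1 ∧ ∀ k, k ≠ c → conjP lam.val k = conjP μ.val k

lemma addsBox_removeCorner (lam : PartitionF) (j : ℕ) (hj : lam.val (j + 1) < lam.val j) :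
    AddsBox (lam.removeCorner j hj) lam (lam.val j) := by
  set μ := lam.removeCorner j hj
  have hμ : ∀ i, i ≠ j → μ.val i = lam.val i := fun i hi => lam.removeCorner_apply_of_ne hj hi
  have hμj : μ.val j + 1 = lam.val j := by rw [lam.removeCorner_apply_self j hj]; omega
  have hle : ∀ i, μ.val i ≤ lam.val i := fun i => by
    rcases eq_or_ne i j with rfl | hi
    · omega
    · exact (hμ i hi).le
  refine ⟨hle, ?_, by omega, ?_, fun k hk => ?_⟩
  · obtain ⟨N, hN⟩ := lam.eventually_zero
    have hN' : ∀ n, max N (j + 1) ≤ n → lam.val n = 0 := fun n hn => hN n (le_of_max_le_left hn)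
    have hjN : j ∈ Finset.range (max N (j + 1)) := by simp
    rw [lam.psize_eq_sum_range hN',
      μ.psize_eq_sum_range fun n hn => Nat.eq_zero_of_le_zero (hN' n hn ▸ hle n),
      Finset.sum_eq_add_sum_sdiff_singleton_of_mem hjN]
    simp only [μ, removeCorner_val, Finset.sum_update_of_mem hjN]
    omega
  · have hset : {i | lam.val j ≤ lam.val i} = insert j {i | lam.val j ≤ μ.val i} := by
      ext i
      rcases eq_or_ne i j with rfl | hi
      · simp
      · simp [hi, hμ i hi]
    have hj_notMem : j ∉ {i | lam.val j ≤ μ.val i} := by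
      change ¬ lam.val j ≤ μ.val j
      omega
    rw [conjP, conjP, Nat.card_coe_set_eq, Nat.card_coe_set_eq, hset,
      Set.ncard_insert_of_notMem hj_notMem (μ.finite_setOf_le (by omega))]
  · refine congrArg (fun s : Set ℕ => Nat.card s) (Set.ext fun i => ?_)
    change k ≤ lam.val i ↔ k ≤ μ.val i
    rcases eq_or_ne i j with rfl | hi
    · omega
    · rw [hμ i hi]

lemma upUp_of_addsBox_of_addsBox {ν μ lam : PartitionF} {c₁ c₂ : ℕ} (h₁ : AddsBox ν μ c₁)
    (h₂ : AddsBox μ lam c₂) (hc : c₁ = c₂ ∨ c₁ + 1 = c₂ ∨ c₂ + 1 = c₁) : UpUp ν lam := by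
  obtain ⟨hle₁, hs₁, hc₁, hk₁, hne₁⟩ := h₁
  obtain ⟨hle₂, hs₂, hc₂, hk₂, hne₂⟩ := h₂
  refine ⟨fun i => (hle₁ i).trans (hle₂ i), by omega, ?_⟩
  rcases hc with rfl | rfl | rfl
  · exact ⟨c₁, hc₁, Or.inl ⟨by omega, fun i _ hi => (hne₂ i hi).trans (hne₁ i hi)⟩⟩
  · refine ⟨c₁, hc₁, Or.inr ⟨?_, ?_, fun i _ hi hi' => (hne₂ i hi').trans (hne₁ i hi)⟩⟩
    · rw [hne₂ c₁ (by omega), hk₁]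
    · rw [hk₂, hne₁ (c₁ + 1) (by omega)]
  · refine ⟨c₂, hc₂, Or.inr ⟨?_, ?_, fun i _ hi hi' => (hne₂ i hi).trans (hne₁ i hi')⟩⟩
    · rw [hk₂, hne₁ c₂ (by omega)]
    · rw [hne₂ (c₂ + 1) (by omega), hk₁]

lemma exists_upUp_of_horizontal_domino (lam : PartitionF) (j : ℕ)
    (hj : lam.val (j + 1) + 2 ≤ lam.val j) : ∃ μ, UpUp μ lam := by
  have hj₁ : lam.val (j + 1) < lam.val j := by omega
  set μ := lam.removeCorner j hj₁
  have hμ : μ.val (j + 1) < μ.val j := by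
    rw [lam.removeCorner_apply_of_ne hj₁ (by omega), lam.removeCorner_apply_self j hj₁]
    omega
  refine ⟨μ.removeCorner j hμ, upUp_of_addsBox_of_addsBox (addsBox_removeCorner μ j hμ)
    (addsBox_removeCorner lam j hj₁) (Or.inr (Or.inl ?_))⟩
  rw [lam.removeCorner_apply_self j hj₁]
  omega

lemma exists_upUp_of_last_row_eq_one (lam : PartitionF) (j : ℕ) (hj : lam.val j ≤ 2)
    (hj₁ : lam.val (j + 1) = 1) (hj₂ : lam.val (j + 2) = 0) : ∃ μ, UpUp μ lam := by
  have hcorner : lam.val (j + 2) < lam.val (j + 1) := by omega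
  set μ := lam.removeCorner (j + 1) hcorner
  have hμj : μ.val j = lam.val j := lam.removeCorner_apply_of_ne hcorner (by omega)
  have hlam : lam.val (j + 1) ≤ lam.val j := lam.antitone j.le_succ
  have hμ : μ.val (j + 1) < μ.val j := by
    rw [lam.removeCorner_apply_self (j + 1) hcorner, hμj]
    omega
  refine ⟨μ.removeCorner j hμ, upUp_of_addsBox_of_addsBox (addsBox_removeCorner μ j hμ)
    (addsBox_removeCorner lam (j + 1) hcorner) ?_⟩
  omega

lemma exists_upUp (lam : PartitionF) (h : 2 ≤ psize lam) : ∃ μ, UpUp μ lam := by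
  have h0 : lam.val 0 ≠ 0 := fun h0 => by
    have := psize_eq_zero_of_head_eq_zero h0
    omega
  obtain ⟨r, hr, hr₁⟩ := lam.exists_last_row h0
  by_cases hr₂ : 2 ≤ lam.val r
  · exact exists_upUp_of_horizontal_domino lam r (by omega)
  obtain _ | j := r
  · have : psize lam = 1 := by
      rw [lam.psize_eq_sum_range (N := 1) fun n hn =>
        Nat.eq_zero_of_le_zero (hr₁ ▸ lam.antitone hn), Finset.sum_range_one]
      omega
    omega
  by_cases hj : 3 ≤ lam.val j
  · exact exists_upUp_of_horizontal_domino lam j (by omega)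
  · exact exists_upUp_of_last_row_eq_one lam j (by omega) (by omega) hr₁

lemma reflTransGen_upUp (lam : PartitionF) :
    Relation.ReflTransGen UpUp (if Even (psize lam) then emptyP else oneboxP) lam := by
  induction hn : psize lam using Nat.strong_induction_on generalizing lam with
  | _ n ih =>
    rcases lt_or_ge n 2 with hn₂ | hn₂
    · interval_cases n
      · simpa [eq_emptyP_of_psize_eq_zero hn] using .refl
      · simpa [eq_oneboxP_of_psize_eq_one hn] using .refl
    · obtain ⟨μ, hμ⟩ := exists_upUp lam (hn ▸ hn₂)
      have hsize : n = psize μ + 2 := hn ▸ hμ.2.1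
      have hparity : Even (psize μ + 2) ↔ Even (psize μ) := by simp [Nat.even_add]
      simp only [hsize, hparity]
      exact (ih (psize μ) (by omega) μ rfl).tail hμ

/-- Every partition `λ` of even (resp. odd) size is connected to the empty (resp. one-box)
partition by a chain of `↗↗`-steps; in particular every partition of size `≥ 2` has a
predecessor under `↗↗`. -/
theorem stmt14 (lam : PartitionF) :
    (∃ (m : ℕ) (c : ℕ → PartitionF),
      c 0 = (if Even (psize lam) then emptyP else oneboxP) ∧ c m = lam ∧
      ∀ i, i < m → UpUp (c i) (c (i + 1))) ∧
    (2 ≤ psize lam → ∃ μ : PartitionF, UpUp μ lam) :=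
  ⟨(reflTransGen_upUp lam).exists_seq, exists_upUp lam⟩
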